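/- (k' lies in the minimal cone when p ≥ 3.) Let p ≥ 3, Σ a finite set with bijection Frob, k ∈ ℤ^Σ with k_τ > 0 for all τ and k ∈ Ξ_min. With M and k' = k + Σ_{τ∈M} k_{Ha_τ} as defined, k' ∈ Ξ_min, i.e. p·k'_τ ≥ k'_{Frob⁻¹∘τ} for all τ ∈ Σ. -/

import Mathlib

/-- The set `M`: `τ` such that for some `s ≥ 1`, `k (Frob⁻ʲ τ) = 2` for `1 ≤ j ≤ s-1`
and `k (Frob⁻ˢ τ) = 1`. -/
def MPred {S : Type*} (Frob : Equiv.Perm S) (k : S → ℤ) (τ : S) : Prop :=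
  ∃ s : ℕ, 1 ≤ s ∧ (∀ j : ℕ, 1 ≤ j → j < s → k ((⇑Frob.symm)^[j] τ) = 2) ∧
    k ((⇑Frob.symm)^[s] τ) = 1

/-- The set `M̃`. -/
def MtPred {S : Type*} (Frob : Equiv.Perm S) (k : S → ℤ) (τ : S) : Prop :=
  (3 ≤ k τ ∧ MPred Frob k τ) ∨
  (k τ = 2 ∧ k (Frob.symm τ) = 1 ∧
    (k ((⇑Frob.symm)^[2] τ) = 1 ∨ k ((⇑Frob.symm)^[2] τ) = 2) ∧
    (k ((⇑Frob.symm)^[2] τ) = 2 → MPred Frob k ((⇑Frob.symm)^[2] τ)))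

/-- The weight `k_{Ha_τ} = p·e_{Frob⁻¹∘τ} − e_τ` of the partial Hasse invariant. -/
def kHa {S : Type*} [DecidableEq S] (p : ℕ) (Frob : Equiv.Perm S) (τ : S) : S → ℤ :=
  (p : ℤ) • Pi.single (Frob.symm τ) (1 : ℤ) - Pi.single τ (1 : ℤ)

/-!
Only two coordinates of `k'` enter the inequality at `τ`, and `k'_σ = k_σ + p·[Frob σ ∈ M] − [σ ∈ M]`.
If `τ ∉ M` the inequality is inherited from `k`. If `τ ∈ M`, then `k (Frob⁻¹ τ) ≤ 2`, and either
`Frob τ ∈ M` or `k τ ≥ 3` (a weight `1`, or `2` at a point of `M`, puts `Frob τ` in `M`). Either way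
`k τ + p·[Frob τ ∈ M] ≥ 3`, so the right side `p·k'_τ` is at least `2p ≥ p + 2`, which bounds the
left side `k'_{Frob⁻¹ τ}`.
-/

section MPred

variable {S : Type*} {Frob : Equiv.Perm S} {k : S → ℤ} {τ : S}

lemma iterate_symm_succ_apply (n : ℕ) : (⇑Frob.symm)^[n + 1] (Frob τ) = (⇑Frob.symm)^[n] τ := by
  rw [Function.iterate_succ_apply, Equiv.symm_apply_apply]

lemma MPred.apply_symm_le_two (h : MPred Frob k τ) : k (Frob.symm τ) ≤ 2 := by
  obtain ⟨s, hs, hj, hks⟩ := h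
  rcases hs.eq_or_lt with rfl | hs
  · simp only [Function.iterate_one] at hks
    omega
  · simpa using (hj 1 le_rfl hs).le

lemma mpred_apply_of_eq_one (h : k τ = 1) : MPred Frob k (Frob τ) :=
  ⟨1, le_rfl, fun _ hj₁ hj₂ => absurd hj₂ (by omega), by rwa [iterate_symm_succ_apply]⟩

lemma MPred.apply_of_eq_two (h : MPred Frob k τ) (h₂ : k τ = 2) : MPred Frob k (Frob τ) := by
  obtain ⟨s, hs, hj, hks⟩ := h
  refine ⟨s + 1, by omega, fun j hj₁ hj₂ => ?_, by rwa [iterate_symm_succ_apply]⟩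
  obtain ⟨m, rfl⟩ : ∃ m, j = m + 1 := ⟨j - 1, by omega⟩
  rw [iterate_symm_succ_apply]
  rcases m.eq_zero_or_pos with rfl | hm
  · exact h₂
  · exact hj m hm (by omega)

lemma MPred.three_le_of_not_apply (h : MPred Frob k τ) (hpos : 0 < k τ)
    (hF : ¬MPred Frob k (Frob τ)) : 3 ≤ k τ := by
  by_contra! hlt
  obtain h₁ | h₂ : k τ = 1 ∨ k τ = 2 := by omega
  · exact hF (mpred_apply_of_eq_one h₁)
  · exact hF (h.apply_of_eq_two h₂)

end MPred

lemma kHa_apply {S : Type*} [DecidableEq S] (p : ℕ) (Frob : Equiv.Perm S) (τ σ : S) :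
    kHa p Frob τ σ = p * (if Frob σ = τ then 1 else 0) - if σ = τ then 1 else 0 := by
  simp only [kHa, Pi.sub_apply, Pi.smul_apply, smul_eq_mul, Pi.single_apply,
    Equiv.eq_symm_apply]

lemma add_sum_kHa_apply {S : Type*} [DecidableEq S] (p : ℕ) (Frob : Equiv.Perm S) (k : S → ℤ)
    (M : Finset S) (σ : S) :
    (k + ∑ τ ∈ M, kHa p Frob τ) σ =
      k σ + p * (if Frob σ ∈ M then 1 else 0) - if σ ∈ M then 1 else 0 := by
  simp only [Pi.add_apply, Finset.sum_apply, kHa_apply, Finset.sum_sub_distrib,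
    ← Finset.mul_sum, Finset.sum_ite_eq, add_sub_assoc]

/-- For `p ≥ 3`, the weight `k' = k + ∑_{τ ∈ M} k_{Ha_τ}` lies in the minimal cone. -/
theorem kprime_in_XiMin {S : Type*} [Fintype S] [DecidableEq S] (p : ℕ) (hp : 3 ≤ p)
    (Frob : Equiv.Perm S) (k : S → ℤ) (hpos : ∀ τ : S, 0 < k τ)
    (hmin : ∀ τ : S, k (Frob.symm τ) ≤ (p : ℤ) * k τ)
    (M : Finset S) (hM : ∀ τ : S, τ ∈ M ↔ MPred Frob k τ)
    (k' : S → ℤ) (hk' : k' = k + ∑ τ ∈ M, kHa p Frob τ) :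
    ∀ τ : S, k' (Frob.symm τ) ≤ (p : ℤ) * k' τ := by
  intro τ
  subst hk'
  rw [add_sum_kHa_apply, add_sum_kHa_apply, Equiv.apply_symm_apply]
  have hp₃ : (3 : ℤ) ≤ p := by exact_mod_cast hp
  have hsymm : 0 ≤ if Frob.symm τ ∈ M then (1 : ℤ) else 0 := by split_ifs <;> norm_num
  by_cases hτ : τ ∈ M
  · have hkτ : 3 ≤ k τ + p * (if Frob τ ∈ M then 1 else 0) := by
      split_ifs with hFτ
      · linarith [hpos τ]
      · simpa using ((hM τ).1 hτ).three_le_of_not_apply (hpos τ) (mt (hM _).2 hFτ)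
    have := ((hM τ).1 hτ).apply_symm_le_two
    rw [if_pos hτ]
    nlinarith
  · have hFτ : 0 ≤ if Frob τ ∈ M then (1 : ℤ) else 0 := by split_ifs <;> norm_num
    rw [if_neg hτ]
    nlinarith [hmin τ, mul_nonneg (mul_nonneg p.cast_nonneg p.cast_nonneg) hFτ]
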